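/- Let B, J be real numbers with 0 < B < 2J and let H be the 8×8 Hermitian matrix on (ℂ²)⊗(ℂ²)⊗(ℂ²) given by H = (B/2)(σ_z⊗I⊗I + I⊗σ_z⊗I + I⊗I⊗σ_z) + J(σ_x⊗σ_x⊗I + σ_y⊗σ_y⊗I + I⊗σ_x⊗σ_x + I⊗σ_y⊗σ_y + σ_x⊗I⊗σ_x + σ_y⊗I⊗σ_y). Then the smallest eigenvalue of H is −2J − B/2, and its eigenspace is two-dimensional. -/

import Mathlib

open scoped Matrix Kronecker
open Module

/-- The Pauli matrix `σ_x`. -/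
noncomputable def σx : Matrix (Fin 2) (Fin 2) ℂ := !![0, 1; 1, 0]
/-- The Pauli matrix `σ_y`. -/
noncomputable def σy : Matrix (Fin 2) (Fin 2) ℂ := !![0, -Complex.I; Complex.I, 0]
/-- The Pauli matrix `σ_z`. -/
noncomputable def σz : Matrix (Fin 2) (Fin 2) ℂ := !![1, 0; 0, -1]

/-- The Hamiltonian of the isotropic XX model of three qubits on a ring in a constant
magnetic field `B` with coupling `J`:
`H = (B/2) ∑ᵢ σᵢᶻ + J ∑ᵢ (σᵢˣ σᵢ₊₁ˣ + σᵢʸ σᵢ₊₁ʸ)` with periodic boundary conditions. -/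
noncomputable def XXHamiltonian (B J : ℝ) :
    Matrix (Fin 2 × Fin 2 × Fin 2) (Fin 2 × Fin 2 × Fin 2) ℂ :=
  ((B / 2 : ℝ) : ℂ) • (σz ⊗ₖ (1 ⊗ₖ 1) + 1 ⊗ₖ (σz ⊗ₖ 1) + 1 ⊗ₖ (1 ⊗ₖ σz)) +
  (J : ℂ) • (σx ⊗ₖ (σx ⊗ₖ 1) + σy ⊗ₖ (σy ⊗ₖ 1) + 1 ⊗ₖ (σx ⊗ₖ σx) + 1 ⊗ₖ (σy ⊗ₖ σy) +
    σx ⊗ₖ (1 ⊗ₖ σx) + σy ⊗ₖ (1 ⊗ₖ σy))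

/-!
The Hamiltonian conserves the number of down spins (index `1`), and on the sectors with one or
two down spins it acts as the field energy plus `2J` times the adjacency operator of the
triangle. It is therefore diagonal in an explicit basis: the two fully polarised states (energies
`±3B/2`) and, in each of the two middle sectors, the translation-invariant state (energy
`±B/2 + 4J`) together with two states orthogonal to it (energy `±B/2 - 2J`). For `0 < B < 2J`
the least of these energies is `-B/2 - 2J`, carried by exactly two basis vectors, and for an
operator diagonal in a basis the eigenvalues are the diagonal entries and each eigenspace is
spanned by the basis vectors carrying its eigenvalue.
-/

open Matrix Module End

section Diagonalizable

variable {K V ι : Type*} [Field K] [AddCommGroup V] [Module K V] [Fintype ι] [DecidableEq ι]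
  {f : Module.End K V} {b : Basis ι K V} {d : ι → K}

theorem eq_toLin_diagonal_of_apply_basis (hf : ∀ i, f (b i) = d i • b i) :
    f = toLin b b (diagonal d) :=
  b.ext fun i => by simp [hf, toLin_self, diagonal_apply, ite_smul]

theorem hasEigenvalue_iff_of_apply_basis (hf : ∀ i, f (b i) = d i • b i) {μ : K} :
    HasEigenvalue f μ ↔ ∃ i, d i = μ := by
  rw [eq_toLin_diagonal_of_apply_basis hf]
  exact hasEigenvalue_toLin_diagonal_iff d b

theorem repr_apply_of_apply_basis (hf : ∀ i, f (b i) = d i • b i) (x : V) (j : ι) :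
    b.repr (f x) j = d j * b.repr x j := by
  rw [eq_toLin_diagonal_of_apply_basis hf, ← LinearMap.toMatrix_mulVec_repr b b,
    LinearMap.toMatrix_toLin, mulVec_diagonal]

theorem eigenspace_eq_span_of_apply_basis (hf : ∀ i, f (b i) = d i • b i) (μ : K) :
    eigenspace f μ = Submodule.span K (b '' {i | d i = μ}) := by
  ext x
  rw [mem_eigenspace_iff, b.mem_span_image, ← b.repr.injective.eq_iff]
  simp only [Finsupp.ext_iff, repr_apply_of_apply_basis hf, map_smul, Finsupp.smul_apply,
    smul_eq_mul, Set.subset_def, Finset.mem_coe, Finsupp.mem_support_iff, Set.mem_ofPred_eq]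
  exact forall_congr' fun j => by rw [mul_eq_mul_right_iff, or_iff_not_imp_right]

theorem finrank_eigenspace_of_apply_basis (hf : ∀ i, f (b i) = d i • b i) (μ : K) :
    finrank K (eigenspace f μ) = Nat.card {i // d i = μ} := by
  classical
  rw [eigenspace_eq_span_of_apply_basis hf, Set.image_eq_range, Nat.card_eq_fintype_card]
  exact finrank_span_eq_card (b.linearIndependent.comp _ Subtype.val_injective)

end Diagonalizable

theorem XXHamiltonian_mulVec_apply (B J : ℝ) (v : Fin 2 × Fin 2 × Fin 2 → ℂ) (a b c : Fin 2) :
    (XXHamiltonian B J *ᵥ v) (a, b, c) =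
      (B / 2 : ℂ) * (σz a a + σz b b + σz c c) * v (a, b, c) +
      2 * J * ((if a = b then 0 else v (b, a, c)) + (if b = c then 0 else v (a, c, b)) +
        (if c = a then 0 else v (c, b, a))) := by
  fin_cases a <;> fin_cases b <;> fin_cases c
  all_goals
  · simp only [XXHamiltonian, σx, σy, σz, mulVec, dotProduct, Fintype.sum_prod_type,
      Fin.sum_univ_two, Matrix.add_apply, Matrix.smul_apply, kroneckerMap_apply, Matrix.one_apply,
      of_apply, cons_val', cons_val_fin_one, cons_val_zero, cons_val_one, Fin.isValue,
      Fin.zero_eta, Fin.mk_one, Fin.reduceEq, reduceIte, smul_eq_mul, Complex.ofReal_div,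
      Complex.ofReal_ofNat]
    ring_nf
    rw [Complex.I_sq]
    ring

noncomputable def xxEigenvector : Fin 8 → Fin 2 × Fin 2 × Fin 2 → ℂ :=
  ![Pi.single (0, 0, 0) 1,
    Pi.single (1, 0, 0) 1 + Pi.single (0, 1, 0) 1 + Pi.single (0, 0, 1) 1,
    Pi.single (1, 0, 0) 1 - Pi.single (0, 1, 0) 1,
    Pi.single (0, 1, 0) 1 - Pi.single (0, 0, 1) 1,
    Pi.single (0, 1, 1) 1 + Pi.single (1, 0, 1) 1 + Pi.single (1, 1, 0) 1,
    Pi.single (0, 1, 1) 1 - Pi.single (1, 0, 1) 1,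
    Pi.single (1, 0, 1) 1 - Pi.single (1, 1, 0) 1,
    Pi.single (1, 1, 1) 1]

noncomputable def xxEigenvalue (B J : ℝ) : Fin 8 → ℝ :=
  ![3 * B / 2, B / 2 + 4 * J, B / 2 - 2 * J, B / 2 - 2 * J,
    -B / 2 + 4 * J, -B / 2 - 2 * J, -B / 2 - 2 * J, -3 * B / 2]

theorem XXHamiltonian_mulVec_xxEigenvector (B J : ℝ) (i : Fin 8) :
    XXHamiltonian B J *ᵥ xxEigenvector i = (xxEigenvalue B J i : ℂ) • xxEigenvector i := by
  funext ⟨a, b, c⟩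
  rw [XXHamiltonian_mulVec_apply]
  fin_cases i <;> fin_cases a <;> fin_cases b <;> fin_cases c <;>
    (simp only [xxEigenvector, xxEigenvalue, σz, of_apply, cons_val', cons_val_zero, cons_val_one,
      cons_val, cons_val_fin_one, Fin.isValue, Fin.zero_eta, Fin.mk_one, Fin.reduceFinMk,
      Pi.add_apply, Pi.sub_apply, Pi.smul_apply, Pi.single_apply, Prod.mk.injEq, Fin.reduceEq,
      and_false, and_true, and_self, reduceIte, smul_eq_mul]; push_cast; ring)

theorem linearIndependent_xxEigenvector : LinearIndependent ℂ xxEigenvector := by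
  refine Fintype.linearIndependent_iff.2 fun g hg => ?_
  have h000 := congrFun hg (0, 0, 0)
  have h100 := congrFun hg (1, 0, 0)
  have h010 := congrFun hg (0, 1, 0)
  have h001 := congrFun hg (0, 0, 1)
  have h011 := congrFun hg (0, 1, 1)
  have h101 := congrFun hg (1, 0, 1)
  have h110 := congrFun hg (1, 1, 0)
  have h111 := congrFun hg (1, 1, 1)
  simp only [xxEigenvector, Fin.sum_univ_eight, Finset.sum_apply, Pi.smul_apply, Pi.add_apply,
    Pi.sub_apply, Pi.zero_apply, Pi.single_apply, cons_val', cons_val_fin_one, cons_val_zero,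
    cons_val_one, cons_val, Fin.isValue, Prod.mk.injEq, Fin.reduceEq, and_false, and_true,
    and_self, reduceIte, smul_eq_mul, mul_one, mul_zero, add_zero, zero_add, sub_self, sub_zero,
    zero_sub, mul_neg] at h000 h100 h010 h001 h011 h101 h110 h111
  intro i
  fin_cases i
  exacts [h000, (by linear_combination (h100 + h010 + h001) / 3 : g 1 = 0),
    (by linear_combination (2 * h100 - h010 - h001) / 3 : g 2 = 0),
    (by linear_combination (h100 + h010 - 2 * h001) / 3 : g 3 = 0),
    (by linear_combination (h011 + h101 + h110) / 3 : g 4 = 0),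
    (by linear_combination (2 * h011 - h101 - h110) / 3 : g 5 = 0),
    (by linear_combination (h011 + h101 - 2 * h110) / 3 : g 6 = 0), h111]

noncomputable def xxEigenbasis : Basis (Fin 8) ℂ (Fin 2 × Fin 2 × Fin 2 → ℂ) :=
  basisOfLinearIndependentOfCardEqFinrank linearIndependent_xxEigenvector (by simp)

theorem XXHamiltonian_mulVecLin_xxEigenbasis (B J : ℝ) (i : Fin 8) :
    (XXHamiltonian B J).mulVecLin (xxEigenbasis i) = (xxEigenvalue B J i : ℂ) • xxEigenbasis i := by
  simp only [xxEigenbasis, coe_basisOfLinearIndependentOfCardEqFinrank, mulVecLin_apply,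
    XXHamiltonian_mulVec_xxEigenvector]

theorem le_xxEigenvalue {B J : ℝ} (hB : 0 ≤ B) (hBJ : B ≤ 2 * J) (i : Fin 8) :
    -(2 * J) - B / 2 ≤ xxEigenvalue B J i := by
  fin_cases i <;>
  · simp only [xxEigenvalue, cons_val_zero, cons_val_one, cons_val, Fin.isValue, Fin.zero_eta,
      Fin.mk_one, Fin.reduceFinMk]
    linarith

theorem xxEigenvalue_eq_iff {B J : ℝ} (hB : 0 < B) (hBJ : B < 2 * J) (i : Fin 8) :
    xxEigenvalue B J i = -(2 * J) - B / 2 ↔ i = 5 ∨ i = 6 := by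
  fin_cases i <;>
  · simp only [xxEigenvalue, cons_val_zero, cons_val_one, cons_val, Fin.isValue, Fin.zero_eta,
      Fin.mk_one, Fin.reduceFinMk, Fin.reduceEq, or_self, or_false, or_true, iff_false, iff_true]
    linarith

/-- For `0 < B < 2J`, the smallest eigenvalue of the three-qubit XX Hamiltonian is
`−2J − B/2` (every eigenvalue is real and at least `−2J − B/2`, and `−2J − B/2` is an
eigenvalue), and its eigenspace is two-dimensional. -/
theorem XXHamiltonian_ground_space_of_small_field (B J : ℝ) (hB : 0 < B) (hBJ : B < 2 * J) :
    (∀ μ : ℂ, Module.End.HasEigenvalue (XXHamiltonian B J).mulVecLin μ →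
      (-(2 * J) - B / 2 ≤ μ.re ∧ μ.im = 0)) ∧
    Module.End.HasEigenvalue (XXHamiltonian B J).mulVecLin ((-(2 * J) - B / 2 : ℝ) : ℂ) ∧
    Module.finrank ℂ
      (Module.End.eigenspace (XXHamiltonian B J).mulVecLin ((-(2 * J) - B / 2 : ℝ) : ℂ)) = 2 := by
  have hf := XXHamiltonian_mulVecLin_xxEigenbasis B J
  refine ⟨fun μ hμ => ?_, (hasEigenvalue_iff_of_apply_basis hf).2 ?_, ?_⟩
  · obtain ⟨i, rfl⟩ := (hasEigenvalue_iff_of_apply_basis hf).1 hμ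
    simpa using le_xxEigenvalue hB.le hBJ.le i
  · exact ⟨5, congrArg _ ((xxEigenvalue_eq_iff hB hBJ 5).2 (.inl rfl))⟩
  · rw [finrank_eigenspace_of_apply_basis hf]
    simp only [Complex.ofReal_inj, xxEigenvalue_eq_iff hB hBJ]
    exact Set.ncard_pair (by decide)
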